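/- arXiv:2305.00872 — 3 statements merged into one kernel-verified Lean document; each statement's English description precedes it below -/
import Mathlib

section
/- Let U be an upward-closed set of configurations (with respect to the embedding order ⊑) with finite basis {C₁, …, Cₙ}, and let k := max over all i, d, q of Cᵢ(d,q). Then for every configuration C, C ∈ U if and only if τ_k(C) ∈ U. -/
/-- The embedding order on configurations. -/
def Embeds {D Q : Type*} (C C' : D →₀ (Q →₀ ℕ)) : Prop :=
  ∃ ρ : D ↪ D, ∀ d, C d ≤ C' (ρ d)

/-- Truncation of a form to `k`. -/
noncomputable def truncForm {Q : Type*} (k : ℕ) (f : Q →₀ ℕ) : Q →₀ ℕ :=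
  f.mapRange (fun x => min x k) (by simp)

/-- State truncation to `k`: `τ_k(C)(d)(q) = min (C d q) k`. -/
noncomputable def trunc {D Q : Type*} (k : ℕ) (C : D →₀ (Q →₀ ℕ)) : D →₀ (Q →₀ ℕ) :=
  C.mapRange (truncForm k) (by simp [truncForm])

/-- Let `U` be an upward-closed set of configurations with finite basis `B`, and let
`k` bound all entries `C₀ d q` of the basis elements (in particular `k` may be taken
to be the maximum of these entries).  Then `C ∈ U ↔ τ_k(C) ∈ U`. -/
theorem mem_iff_trunc_mem {D Q : Type*} [Fintype Q] [Infinite D]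
    (U : Set (D →₀ (Q →₀ ℕ))) (B : Finset (D →₀ (Q →₀ ℕ)))
    (hU : ∀ C, C ∈ U ↔ ∃ C₀ ∈ B, Embeds C₀ C)
    (k : ℕ) (hk : ∀ C₀ ∈ B, ∀ d q, C₀ d q ≤ k)
    (C : D →₀ (Q →₀ ℕ)) :
    C ∈ U ↔ trunc k C ∈ U := by
  have htr : ∀ (C' : D →₀ (Q →₀ ℕ)) d q, trunc k C' d q = min (C' d q) k := by
    intro C' d q
    simp [trunc, truncForm, Finsupp.mapRange_apply]
  rw [hU, hU]
  constructor
  · rintro ⟨C₀, hC₀, ρ, hρ⟩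
    refine ⟨C₀, hC₀, ρ, fun d => ?_⟩
    rw [Finsupp.le_def]
    intro q
    rw [htr, le_min_iff]
    exact ⟨Finsupp.le_def.mp (hρ d) q, hk C₀ hC₀ d q⟩
  · rintro ⟨C₀, hC₀, ρ, hρ⟩
    refine ⟨C₀, hC₀, ρ, fun d => ?_⟩
    rw [Finsupp.le_def]
    intro q
    exact le_trans (Finsupp.le_def.mp (hρ d) q) (by rw [htr]; exact min_le_left _ _)
end

section
/- In an immediate observation protocol with unordered data, duplicating the forms of a datum with a fresh color preserves reachability: if C →* C' and d ∈ supp(C), d' ∉ supp(C), then C + (C(d))_{d'} →* C' + (C'(d))_{d'}. -/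
/-- A transition set: `((p,q), s, (p',q'))` where `s = true` encodes the data
comparison `=` and `s = false` encodes `≠`. -/
abbrev PTrans (Q : Type*) := Set ((Q × Q) × Bool × (Q × Q))

/-- The configuration with a single agent of datum `d` in state `q`. -/
noncomputable def sing {D Q : Type*} (d : D) (q : Q) : D →₀ (Q →₀ ℕ) :=
  Finsupp.single d (Finsupp.single q 1)

/-- One step of a population protocol with unordered data. -/
def Step {D Q : Type*} (δ : PTrans Q) (C C' : D →₀ (Q →₀ ℕ)) : Prop :=
  ∃ (p q p' q' : Q) (s : Bool) (d e : D),
    ((p, q), s, (p', q')) ∈ δ ∧ (if s then d = e else d ≠ e) ∧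
    sing d p + sing e q ≤ C ∧
    C' = C - (sing d p + sing e q) + (sing d p' + sing e q')

/-- Reachability: reflexive-transitive closure of the step relation. -/
def Reach {D Q : Type*} (δ : PTrans Q) : (D →₀ (Q →₀ ℕ)) → (D →₀ (Q →₀ ℕ)) → Prop :=
  Relation.ReflTransGen (Step δ)

/-- A transition set is immediate observation if each transition has the form
`((p,q), ∼, (p,q'))`: the observed agent's state is unchanged. -/
def IsIO {Q : Type*} (δ : PTrans Q) : Prop := ∀ t ∈ δ, t.2.2.1 = t.1.1

section Aux
set_option linter.unusedSectionVars false

variable {D Q : Type*}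

section Dec
variable [DecidableEq D] [DecidableEq Q]

lemma sing_apply₂ (a x : D) (p q : Q) :
    sing a p x q = if a = x ∧ p = q then 1 else 0 := by
  simp [sing, Finsupp.single_apply, apply_ite (fun f : Q →₀ ℕ => f q), ite_and]

lemma single_apply₂ (a x : D) (v : Q →₀ ℕ) (q : Q) :
    Finsupp.single a v x q = if a = x then v q else 0 := by
  simp [Finsupp.single_apply, apply_ite (fun f : Q →₀ ℕ => f q)]

end Dec

lemma le_iff₂ {f g : D →₀ (Q →₀ ℕ)} : f ≤ g ↔ ∀ x q, f x q ≤ g x q := by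
  rw [Finsupp.le_def]; exact forall_congr' fun x => Finsupp.le_def

lemma eq_iff₂ {f g : D →₀ (Q →₀ ℕ)} : f = g ↔ ∀ x q, f x q = g x q := by
  constructor
  · intro h x q; rw [h]
  · intro h; ext x q; exact h x q

lemma sub_apply₂ (f g : D →₀ (Q →₀ ℕ)) (x : D) (q : Q) :
    (f - g) x q = f x q - g x q := by
  rw [Finsupp.tsub_apply, Finsupp.tsub_apply]

lemma zero_iff₂ {f : D →₀ (Q →₀ ℕ)} {x : D} : f x = 0 ↔ ∀ q, f x q = 0 := by
  constructor
  · intro h q; rw [h]; rfl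
  · intro h; ext q; exact h q

/-- Pointwise form of the step equation. -/
lemma step_apply [DecidableEq D] [DecidableEq Q]
    {C C' : D →₀ (Q →₀ ℕ)} {a e : D} {p q p' q' : Q}
    (heq : C' = C - (sing a p + sing e q) + (sing a p' + sing e q')) :
    ∀ x y, C' x y = C x y
      - ((if a = x ∧ p = y then 1 else 0) + (if e = x ∧ q = y then 1 else 0))
      + ((if a = x ∧ p' = y then 1 else 0) + (if e = x ∧ q' = y then 1 else 0)) := by
  intro x y
  rw [heq]
  simp [Finsupp.add_apply, sub_apply₂, sing_apply₂]

/-- Steps are invariant under adding a context. -/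
lemma step_add {δ : PTrans Q} {C C' : D →₀ (Q →₀ ℕ)} (h : Step δ C C')
    (X : D →₀ (Q →₀ ℕ)) : Step δ (C + X) (C' + X) := by
  obtain ⟨p, q, p', q', s, a, e, ht, hs, hle, heq⟩ := h
  refine ⟨p, q, p', q', s, a, e, ht, hs, le_trans hle (le_iff₂.mpr fun x y => by simp [Finsupp.add_apply]), ?_⟩
  rw [heq, eq_iff₂]
  intro x y
  have h2 := le_iff₂.mp hle x y
  classical
  simp only [Finsupp.add_apply, sub_apply₂, sing_apply₂] at h2 ⊢
  split_ifs at h2 ⊢ <;> omega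

/-- Steps preserve the support exactly. -/
lemma step_zero_iff {δ : PTrans Q} {C C' : D →₀ (Q →₀ ℕ)} (h : Step δ C C')
    (x : D) : C x = 0 ↔ C' x = 0 := by
  classical
  obtain ⟨p, q, p', q', s, a, e, ht, hs, hle, heq⟩ := h
  have hC' := step_apply heq
  have hle₂ := fun x y => le_iff₂.mp hle x y
  simp only [Finsupp.add_apply, sing_apply₂] at hle₂
  have ha1 : 1 ≤ C a p := by
    have := hle₂ a p; simp at this; omega
  have he1 : 1 ≤ C e q := by
    have := hle₂ e q; simp at this; omega
  constructor
  · intro h0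
    rw [zero_iff₂] at h0 ⊢
    intro y
    have hax : a ≠ x := by rintro rfl; have := h0 p; omega
    have hex : e ≠ x := by rintro rfl; have := h0 q; omega
    have h1 := hC' x y
    have h2 := h0 y
    simp [hax, hex] at h1
    omega
  · intro h0
    rw [zero_iff₂] at h0 ⊢
    intro y
    have hax : a ≠ x := by
      rintro rfl
      have h1 := hC' a p'
      have h2 := hle₂ a p'
      have h3 := h0 p'
      simp at h1 h2
      split_ifs at h1 h2 <;> omega
    have hex : e ≠ x := by
      rintro rfl
      have h1 := hC' e q'
      have h2 := hle₂ e q'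
      have h3 := h0 q'
      simp at h1 h2
      split_ifs at h1 h2 <;> omega
    have h1 := hC' x y
    have h2 := h0 y
    simp [hax, hex] at h1
    omega

lemma reach_zero_iff {δ : PTrans Q} {C C' : D →₀ (Q →₀ ℕ)} (h : Reach δ C C')
    (x : D) : C x = 0 ↔ C' x = 0 := by
  induction h with
  | refl => rfl
  | tail _ hst ih => exact ih.trans (step_zero_iff hst x)

/-- Key lemma: a single step can be simulated after duplicating a datum's form. -/
lemma step_dup {δ : PTrans Q} (hIO : IsIO δ) {C₁ C₂ : D →₀ (Q →₀ ℕ)}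
    (h : Step δ C₁ C₂) (d d' : D) (hd : C₁ d ≠ 0) (hd' : C₁ d' = 0) :
    Reach δ (C₁ + Finsupp.single d' (C₁ d)) (C₂ + Finsupp.single d' (C₂ d)) := by
  classical
  obtain ⟨p, q, p', q', s, a, e, ht, hs, hle, heq⟩ := h
  have hpp : p = p' := (hIO _ ht).symm
  subst hpp
  have hC₂ := step_apply heq
  have hle₂ := fun x y => le_iff₂.mp hle x y
  simp only [Finsupp.add_apply, sing_apply₂] at hle₂
  have ha1 : 1 ≤ C₁ a p := by
    have := hle₂ a p; simp at this; omega
  have he1 : 1 ≤ C₁ e q := by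
    have := hle₂ e q; simp at this; omega
  have had' : a ≠ d' := by
    rintro rfl; rw [zero_iff₂] at hd'; have := hd' p; omega
  have hed' : e ≠ d' := by
    rintro rfl; rw [zero_iff₂] at hd'; have := hd' q; omega
  have hstep₁ : Step δ C₁ C₂ := ⟨p, q, p, q', s, a, e, ht, hs, hle, heq⟩
  by_cases hed : e = d
  case neg =>
    -- the step does not touch datum d, so C₂ d = C₁ d and one step suffices
    have hCd : C₂ d = C₁ d := by
      ext y
      have h1 := hC₂ d y
      have h2 := hle₂ d y
      simp [hed] at h1 h2
      split_ifs at h1 h2 <;> omega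
    rw [hCd]
    exact Relation.ReflTransGen.single (step_add hstep₁ _)
  case pos =>
    subst hed
    -- first, do the original step in the enlarged configuration
    have step1 := step_add hstep₁ (Finsupp.single d' (C₁ e))
    -- then replicate the move at the fresh datum d'
    have step2 : Step δ (C₂ + Finsupp.single d' (C₁ e)) (C₂ + Finsupp.single d' (C₂ e)) := by
      cases s with
      | true =>
        simp only [if_true] at hs
        subst hs
        refine ⟨p, q, p, q', true, d', d', ht, by simp, ?_, ?_⟩
        · rw [le_iff₂]
          intro x y
          simp only [Finsupp.add_apply, sing_apply₂, single_apply₂]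
          by_cases hx : d' = x
          · subst hx
            have h2 := hle₂ a p
            have h3 := hle₂ a y
            simp at h3
            simp
            split_ifs at h3 ⊢ <;> omega
          · simp [hx]
        · rw [eq_iff₂]
          intro x y
          simp only [Finsupp.add_apply, sub_apply₂, sing_apply₂, single_apply₂]
          by_cases hx : d' = x
          · subst hx
            have h1 := hC₂ a y
            have h2 := hle₂ a y
            simp at h1 h2
            simp
            split_ifs at h1 h2 ⊢ <;> omega
          · simp [hx]
      | false =>
        simp only [Bool.false_eq_true, if_false] at hs
        have hC2ap : 1 ≤ C₂ a p := by
          have h1 := hC₂ a p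
          have h2 := hle₂ a p
          simp [Ne.symm hs] at h1 h2
          omega
        refine ⟨p, q, p, q', false, a, d', ht, by simp [had'], ?_, ?_⟩
        · rw [le_iff₂]
          intro x y
          simp only [Finsupp.add_apply, sing_apply₂, single_apply₂]
          by_cases hax : a = x
          · subst hax
            have h1 := hC₂ a y
            have h2 := hle₂ a y
            simp [Ne.symm hs, Ne.symm had'] at h1 h2 ⊢
            split_ifs at h1 h2 ⊢ <;> omega
          · simp [hax]
            by_cases hdx : d' = x
            · subst hdx
              simp
              by_cases hqy : q = y
              · subst hqy; simp; omega
              · simp [hqy]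
            · simp [hdx]
        · rw [eq_iff₂]
          intro x y
          simp only [Finsupp.add_apply, sub_apply₂, sing_apply₂, single_apply₂]
          by_cases hdx : d' = x
          · subst hdx
            have h1 := hC₂ e y
            have h2 := hle₂ e y
            simp [hs, had', Ne.symm had'] at h1 h2 ⊢
            split_ifs at h1 h2 ⊢ <;> omega
          · simp [hdx]
            by_cases hax : a = x
            · subst hax
              by_cases hpy : p = y
              · subst hpy; simp; omega
              · simp [hpy]
            · simp [hax]
    exact Relation.ReflTransGen.head step1 (Relation.ReflTransGen.single step2)

end Aux

/-- In an immediate observation protocol, duplicating the form of a datum `d` with a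
fresh color `d'` preserves reachability:
if `C →* C'`, `d ∈ supp C` and `d' ∉ supp C`, then
`C + (C d)_{d'} →* C' + (C' d)_{d'}`. -/
theorem io_duplicate_fresh_color {D Q : Type*} (δ : PTrans Q) (hIO : IsIO δ)
    (C C' : D →₀ (Q →₀ ℕ)) (h : Reach δ C C')
    (d d' : D) (hd : C d ≠ 0) (hd' : C d' = 0) :
    Reach δ (C + Finsupp.single d' (C d)) (C' + Finsupp.single d' (C' d)) := by
  induction h with
  | refl => exact Relation.ReflTransGen.refl
  | @tail B C₂ hr hst ih =>
    have hBd : B d ≠ 0 := fun h0 => hd ((reach_zero_iff hr d).mpr h0)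
    have hBd' : B d' = 0 := (reach_zero_iff hr d').mp hd'
    exact ih.trans (step_dup hIO hst d d' hBd hBd')
end

section
/- Define the equivalence C ≡ C' iff C ⊑ C' and C' ⊑ C. Then C ≡ C' holds if and only if for every form f ≠ 0, the number of data mapped to f is the same in C and C': #_f(C) = #_f(C') for all f, where #_f(C) := |{d ∈ D : C(d) = f}|. -/
/-- `#_f(C)`: the number of data mapped by `C` to the form `f`. -/
noncomputable def countForm {D Q : Type*} (f : Q →₀ ℕ) (C : D →₀ (Q →₀ ℕ)) : ℕ :=
  Set.ncard {d | C d = f}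

lemma countForm_le_aux {D Q : Type*} (C C' : D →₀ (Q →₀ ℕ))
    (h : Embeds C C') (h' : Embeds C' C) (f : Q →₀ ℕ) (hf : f ≠ 0) :
    countForm f C ≤ countForm f C' := by
  classical
  obtain ⟨ρ, hρ⟩ := h
  obtain ⟨σ, hσ⟩ := h'
  have hmapρ : ∀ d ∈ C.support, ρ d ∈ C'.support := by
    intro d hd
    simp only [Finsupp.mem_support_iff] at hd ⊢
    intro h0
    exact hd (le_antisymm (h0 ▸ hρ d) zero_le)
  have hmapσ : ∀ d ∈ C'.support, σ d ∈ C.support := by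
    intro d hd
    simp only [Finsupp.mem_support_iff] at hd ⊢
    intro h0
    exact hd (le_antisymm (h0 ▸ hσ d) zero_le)
  have hc2 : C'.support.card ≤ C.support.card :=
    Finset.card_le_card_of_injOn σ hmapσ (σ.injective.injOn)
  have hπinj : Set.InjOn (fun d => σ (ρ d)) C.support :=
    fun a _ b _ hab => ρ.injective (σ.injective hab)
  have himg : C.support.image (fun d => σ (ρ d)) = C.support := by
    apply Finset.eq_of_subset_of_card_le
    · intro e he
      obtain ⟨d, hd, rfl⟩ := Finset.mem_image.mp he
      exact hmapσ _ (hmapρ _ hd)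
    · rw [Finset.card_image_of_injOn hπinj]
  have hsum : ∑ d ∈ C.support, C d = ∑ d ∈ C.support, C (σ (ρ d)) := by
    conv_lhs => rw [← himg]
    rw [Finset.sum_image (fun a ha b hb => hπinj ha hb)]
  -- hence C d = C (σ (ρ d)) on the support, so C d = C' (ρ d)
  have hkey : ∀ d ∈ C.support, C d = C' (ρ d) := by
    have heq : ∀ d ∈ C.support, C d = C (σ (ρ d)) :=
      (Finset.sum_eq_sum_iff_of_le (fun d _ => le_trans (hρ d) (hσ (ρ d)))).mp hsum
    intro d hd
    exact le_antisymm (hρ d) ((heq d hd) ▸ hσ (ρ d))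
  -- count
  have hfin : {d | C d = f}.Finite := by
    apply Set.Finite.subset C.support.finite_toSet
    intro d hd
    simpa [Finsupp.mem_support_iff] using hd ▸ hf
  have hfin' : {d | C' d = f}.Finite := by
    apply Set.Finite.subset C'.support.finite_toSet
    intro d hd
    simpa [Finsupp.mem_support_iff] using hd ▸ hf
  have hsub : ρ '' {d | C d = f} ⊆ {d | C' d = f} := by
    rintro _ ⟨d, hd, rfl⟩
    have hds : d ∈ C.support := by simpa [Finsupp.mem_support_iff] using hd ▸ hf
    exact ((hkey d hds).symm.trans hd)
  calc countForm f C = (ρ '' {d | C d = f}).ncard :=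
        (Set.ncard_image_of_injective _ ρ.injective).symm
    _ ≤ countForm f C' := Set.ncard_le_ncard hsub hfin'

/-- Two configurations are equivalent (mutually embeddable) iff they map the same
number of data to each nonzero form. -/
theorem equiv_iff_form_counts {D Q : Type*} [Infinite D]
    (C C' : D →₀ (Q →₀ ℕ)) :
    (Embeds C C' ∧ Embeds C' C) ↔
      ∀ f : Q →₀ ℕ, f ≠ 0 → countForm f C = countForm f C' := by
  constructor
  · rintro ⟨h, h'⟩ f hf
    exact le_antisymm (countForm_le_aux C C' h h' f hf) (countForm_le_aux C' C h' h f hf)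
  · intro hcnt
    -- build a bijection of D preserving forms
    have hmk : ∀ f : Q →₀ ℕ, Nonempty ({d // C d = f} ≃ {d // C' d = f}) := by
      intro f
      by_cases hf : f = 0
      · subst hf
        have h1 : ({d | C d = 0} : Set D) = (↑C.support : Set D)ᶜ := by
          ext d; simp [Finsupp.mem_support_iff]
        have h2 : ({d | C' d = 0} : Set D) = (↑C'.support : Set D)ᶜ := by
          ext d; simp [Finsupp.mem_support_iff]
        have m1 : Cardinal.mk {d | C d = 0} = Cardinal.mk D := by
          rw [h1]
          exact Cardinal.mk_compl_of_infinite _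
            (lt_of_lt_of_le (Cardinal.mk_lt_aleph0_iff.mpr (Set.toFinite _)) (Cardinal.aleph0_le_mk D))
        have m2 : Cardinal.mk {d | C' d = 0} = Cardinal.mk D := by
          rw [h2]
          exact Cardinal.mk_compl_of_infinite _
            (lt_of_lt_of_le (Cardinal.mk_lt_aleph0_iff.mpr (Set.toFinite _)) (Cardinal.aleph0_le_mk D))
        exact Cardinal.eq.mp (m1.trans m2.symm)
      · have hfin : {d | C d = f}.Finite := by
          apply Set.Finite.subset C.support.finite_toSet
          intro d hd
          simpa [Finsupp.mem_support_iff] using hd ▸ hf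
        have hfin' : {d | C' d = f}.Finite := by
          apply Set.Finite.subset C'.support.finite_toSet
          intro d hd
          simpa [Finsupp.mem_support_iff] using hd ▸ hf
        have : Nat.card {d // C d = f} = Nat.card {d // C' d = f} := by
          have h := hcnt f hf
          unfold countForm at h
          show Nat.card ↥{d | C d = f} = Nat.card ↥{d | C' d = f}
          rw [Nat.card_coe_set_eq, Nat.card_coe_set_eq]
          exact h
        have f1 : Finite {d // C d = f} := hfin
        have f2 : Finite {d // C' d = f} := hfin'
        exact Finite.card_eq.mp this
    have e' : ∀ f, {d // C d = f} ≃ {d // C' d = f} := fun f => (hmk f).some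
    let π : D ≃ D :=
      (Equiv.sigmaFiberEquiv (fun d => C d)).symm.trans
        ((Equiv.sigmaCongrRight e').trans (Equiv.sigmaFiberEquiv (fun d => C' d)))
    have hπ : ∀ d, C' (π d) = C d := by
      intro d
      simp only [π, Equiv.trans_apply, Equiv.sigmaCongrRight_apply]
      exact ((e' (C d)) ⟨d, rfl⟩).2
    constructor
    · exact ⟨π.toEmbedding, fun d => (hπ d).ge⟩
    · exact ⟨π.symm.toEmbedding, fun d => by
        have := hπ (π.symm d); rw [Equiv.apply_symm_apply] at this; exact this.le⟩
end
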